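/- Let X be a topological space and A ⊆ X a subset. Suppose every point x ∈ X has a neighbourhood D ⊆ X such that D \ A is open in D, dense in D, and connected. Then X \ A is open and dense in X; if moreover X is connected and locally connected, then X \ A is connected. -/
import Mathlib


theorem stmt_0 {X : Type*} [TopologicalSpace X] (A : Set X)
    (h : ∀ x : X, ∃ D : Set X, D ∈ nhds x ∧
      IsOpen (Subtype.val ⁻¹' (D \ A) : Set D) ∧
      Dense (Subtype.val ⁻¹' (D \ A) : Set D) ∧
      IsConnected (D \ A)) :
    IsOpen Aᶜ ∧ Dense Aᶜ ∧
      (ConnectedSpace X → LocallyConnectedSpace X → IsConnected (Aᶜ : Set X)) := by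
  -- repackage hypothesis
  have h' : ∀ x : X, ∃ D ∈ nhds x, (D \ A ∈ nhds x → x ∈ A → False) ∧
      D ⊆ closure (D \ A) ∧ IsConnected (D \ A) := by
    intro x
    obtain ⟨D, hD, hDo, hDd, hDc⟩ := h x
    refine ⟨D, hD, ?_, ?_, hDc⟩
    · intro h1 h2
      exact (mem_of_mem_nhds h1).2 h2
    · intro y hy
      have h1 : (⟨y, hy⟩ : D) ∈ closure (Subtype.val ⁻¹' (D \ A)) := hDd _
      rw [closure_subtype] at h1
      have himg : Subtype.val '' (Subtype.val ⁻¹' (D \ A) : Set D) = D \ A := by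
        rw [Subtype.image_preimage_coe]
        exact Set.inter_eq_self_of_subset_right Set.diff_subset
      rwa [himg] at h1
  have hopen : IsOpen Aᶜ := by
    rw [isOpen_iff_mem_nhds]
    intro x hx
    obtain ⟨D, hD, hDo, hDd, hDc⟩ := h x
    obtain ⟨U, hU, hUD⟩ := isOpen_induced_iff.mp hDo
    have hxD : x ∈ D := mem_of_mem_nhds hD
    have hxU : x ∈ U := by
      have h1 : (⟨x, hxD⟩ : D) ∈ Subtype.val ⁻¹' (D \ A) := ⟨hxD, hx⟩
      rw [← hUD] at h1; exact h1
    have hUDn : U ∩ D ∈ nhds x := Filter.inter_mem (hU.mem_nhds hxU) hD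
    refine Filter.mem_of_superset hUDn ?_
    rintro y ⟨hyU, hyD⟩
    have h1 : (⟨y, hyD⟩ : D) ∈ Subtype.val ⁻¹' (D \ A) := by
      rw [← hUD]; exact hyU
    exact h1.2
  have hdense : Dense (Aᶜ : Set X) := by
    intro y
    obtain ⟨D, hD, _, hDd, _⟩ := h' y
    exact closure_mono (fun z hz => hz.2) (hDd (mem_of_mem_nhds hD))
  refine ⟨hopen, hdense, fun hX _ => ?_⟩
  obtain ⟨x₀, hx₀⟩ : (Aᶜ : Set X).Nonempty := by
    have : Nonempty X := hX.toNonempty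
    exact hdense.nonempty
  set C := connectedComponentIn (Aᶜ : Set X) x₀ with hC
  have hCne : C.Nonempty := ⟨x₀, mem_connectedComponentIn hx₀⟩
  -- key: a D\A meeting C is contained in C
  have key : ∀ {D : Set X}, IsConnected (D \ A) → ∀ z ∈ C, z ∈ D → D \ A ⊆ C := by
    intro D hDc z hzC hzD
    have hzA : z ∉ A := (connectedComponentIn_subset _ _ hzC : z ∈ Aᶜ)
    have hsub : D \ A ⊆ connectedComponentIn (Aᶜ : Set X) z :=
      hDc.isPreconnected.subset_connectedComponentIn ⟨hzD, hzA⟩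
        (fun w hw => hw.2)
    rwa [← connectedComponentIn_eq hzC] at hsub
  have hclos : IsOpen (closure C) := by
    rw [isOpen_iff_mem_nhds]
    intro y hy
    obtain ⟨D, hD, _, hDd, hDc⟩ := h' y
    obtain ⟨z, hzD, hzC⟩ := mem_closure_iff_nhds.mp hy D hD
    have hsub : D \ A ⊆ C := key hDc z hzC hzD
    exact Filter.mem_of_superset hD
      (fun w hw => closure_mono hsub (hDd hw))
  have huniv : closure C = Set.univ :=
    IsClopen.eq_univ ⟨isClosed_closure, hclos⟩ (hCne.mono subset_closure)
  have hAC : (Aᶜ : Set X) = C := by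
    apply Set.Subset.antisymm
    · intro y hy
      have hyc : y ∈ closure C := huniv ▸ Set.mem_univ y
      obtain ⟨D, hD, _, hDd, hDc⟩ := h' y
      obtain ⟨z, hzD, hzC⟩ := mem_closure_iff_nhds.mp hyc D hD
      exact key hDc z hzC hzD ⟨mem_of_mem_nhds hD, hy⟩
    · exact connectedComponentIn_subset _ _
  rw [hAC]
  exact isConnected_connectedComponentIn_iff.mpr hx₀
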